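/- arXiv:math/0511053 — 3 statements merged into one kernel-verified Lean document; each statement's English description precedes it below -/
import Mathlib

section
/- Let κ > 0, α_κ = 1/(4+2κ), and S(y) = ∫_{α_κ}^{y} dx/(x(1-x)^{1+κ}) for y ∈ (0,1). Then y/(1-y) ~ (κ S(y))^{1/κ} as y → 1⁻, i.e., lim_{y→1⁻} (y/(1-y)) / (κ S(y))^{1/κ} = 1. -/
/-
Near `x = 1` the integrand `1 / (x (1 - x)^(1 + κ))` differs from `(1 - x)^(-(1 + κ))`, whose
primitive is `(1 - x)^(-κ) / κ`, only by the factor `1 / x ∈ [1, 1 / y₀]` on `[y₀, 1)`.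
Hence `κ S(y) (1 - y)^κ` lies eventually between `1 - o(1)` and `1 / y₀ + o(1)` for every
`y₀ < 1`, so it tends to `1`; taking the `1/κ`-th power gives the claim.
-/

open MeasureTheory Real Filter Set intervalIntegral Topology

noncomputable def jacobiScale (κ a y : ℝ) : ℝ :=
  ∫ x in a..y, 1 / (x * (1 - x) ^ (1 + κ))

lemma intervalIntegrable_jacobiScale_integrand (κ : ℝ) {a b : ℝ} (ha : a ∈ Ioo 0 1)
    (hb : b ∈ Ioo 0 1) : IntervalIntegrable (fun x => 1 / (x * (1 - x) ^ (1 + κ))) volume a b := by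
  refine ContinuousOn.intervalIntegrable fun x hx => ?_
  obtain ⟨hx0, hx1⟩ := ordConnected_Ioo.uIcc_subset ha hb hx
  have : 0 < 1 - x := sub_pos.2 hx1
  exact ContinuousAt.continuousWithinAt <| continuousAt_const.div
    (continuousAt_id.mul ((continuousAt_const.sub continuousAt_id).rpow_const (Or.inl this.ne')))
    (by positivity)

lemma intervalIntegrable_one_sub_rpow {a b : ℝ} (r : ℝ) (ha : a < 1) (hb : b < 1) :
    IntervalIntegrable (fun x => (1 - x) ^ r) volume a b := by
  refine ContinuousOn.intervalIntegrable fun x hx => ?_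
  have : 0 < 1 - x := sub_pos.2 <| hx.2.trans_lt (max_lt ha hb)
  exact ContinuousAt.continuousWithinAt (by fun_prop (disch := exact Or.inl this.ne'))

lemma integral_one_sub_rpow_neg_one_sub {κ a b : ℝ} (hκ : κ ≠ 0) (ha : a < 1) (hb : b < 1) :
    ∫ x in a..b, (1 - x) ^ (-(1 + κ)) = ((1 - b) ^ (-κ) - (1 - a) ^ (-κ)) / κ := by
  have h0 : (0 : ℝ) ∉ uIcc (1 - b) (1 - a) := fun h =>
    (lt_min (sub_pos.2 hb) (sub_pos.2 ha)).not_ge h.1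
  rw [integral_comp_sub_left (fun x => x ^ (-(1 + κ))),
    integral_rpow (Or.inr ⟨by contrapose! hκ; linarith, h0⟩)]
  rw [show -(1 + κ) + 1 = -κ by ring, div_neg, ← neg_div, neg_sub]

section Bounds

variable {κ a y₀ y : ℝ}

lemma jacobiScale_integrand_mem_Icc {x : ℝ} (hy₀ : 0 < y₀) (hx : x ∈ Icc y₀ y) (hy : y < 1) :
    1 / (x * (1 - x) ^ (1 + κ)) ∈ Icc ((1 - x) ^ (-(1 + κ))) (y₀⁻¹ * (1 - x) ^ (-(1 + κ))) := by
  have hx0 : 0 < x := hy₀.trans_le hx.1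
  have hg : 0 ≤ (1 - x) ^ (-(1 + κ)) := rpow_nonneg (by linarith [hx.2]) _
  rw [one_div, mul_inv, ← rpow_neg (by linarith [hx.2])]
  refine ⟨le_mul_of_one_le_left hg ?_, mul_le_mul_of_nonneg_right ?_ hg⟩
  · exact one_le_inv₀ hx0 |>.2 (by linarith [hx.2])
  · exact inv_anti₀ hy₀ hx.1

lemma one_sub_rpow_neg_sub_le_mul_jacobiScale (hκ : 0 < κ) (hy₀ : 0 < y₀) (h : y₀ ≤ y)
    (hy : y < 1) : (1 - y) ^ (-κ) - (1 - y₀) ^ (-κ) ≤ κ * jacobiScale κ y₀ y := by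
  have hle : ∫ x in y₀..y, (1 - x) ^ (-(1 + κ)) ≤ jacobiScale κ y₀ y :=
    integral_mono_on h (intervalIntegrable_one_sub_rpow _ (h.trans_lt hy) hy)
      (intervalIntegrable_jacobiScale_integrand κ ⟨hy₀, h.trans_lt hy⟩ ⟨hy₀.trans_le h, hy⟩)
      fun x hx => (jacobiScale_integrand_mem_Icc hy₀ hx hy).1
  rw [integral_one_sub_rpow_neg_one_sub hκ.ne' (h.trans_lt hy) hy] at hle
  rwa [div_le_iff₀' hκ] at hle

lemma mul_jacobiScale_le_inv_mul (hκ : 0 < κ) (hy₀ : 0 < y₀) (h : y₀ ≤ y) (hy : y < 1) :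
    κ * jacobiScale κ y₀ y ≤ y₀⁻¹ * ((1 - y) ^ (-κ) - (1 - y₀) ^ (-κ)) := by
  have hle : jacobiScale κ y₀ y ≤ ∫ x in y₀..y, y₀⁻¹ * (1 - x) ^ (-(1 + κ)) :=
    integral_mono_on h
      (intervalIntegrable_jacobiScale_integrand κ ⟨hy₀, h.trans_lt hy⟩ ⟨hy₀.trans_le h, hy⟩)
      ((intervalIntegrable_one_sub_rpow _ (h.trans_lt hy) hy).const_mul _)
      fun x hx => (jacobiScale_integrand_mem_Icc hy₀ hx hy).2
  rw [intervalIntegral.integral_const_mul,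
    integral_one_sub_rpow_neg_one_sub hκ.ne' (h.trans_lt hy) hy] at hle
  rwa [mul_div_assoc', le_div_iff₀' hκ] at hle

lemma jacobiScale_nonneg (ha : 0 < a) (h : a ≤ y) (hy : y < 1) : 0 ≤ jacobiScale κ a y := by
  refine integral_nonneg h fun x hx => ?_
  have hx0 : 0 < x := ha.trans_le hx.1
  have hx1 : 0 < 1 - x := by linarith [hx.2]
  positivity

lemma jacobiScale_add (ha : 0 < a) (h₀ : a ≤ y₀) (h : y₀ ≤ y) (hy : y < 1) :
    jacobiScale κ a y₀ + jacobiScale κ y₀ y = jacobiScale κ a y := by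
  have hy₀ : y₀ ∈ Ioo 0 1 := ⟨ha.trans_le h₀, h.trans_lt hy⟩
  exact integral_add_adjacent_intervals
    (intervalIntegrable_jacobiScale_integrand κ ⟨ha, h₀.trans_lt hy₀.2⟩ hy₀)
    (intervalIntegrable_jacobiScale_integrand κ hy₀ ⟨hy₀.1.trans_le h, hy⟩)

lemma one_sub_le_one_sub_rpow_mul_jacobiScale (hκ : 0 < κ) (ha : 0 < a) (h : a ≤ y)
    (hy : y < 1) : 1 - (1 - y) ^ κ * (1 - a) ^ (-κ) ≤ (1 - y) ^ κ * (κ * jacobiScale κ a y) := by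
  have hy' : 0 < 1 - y := sub_pos.2 hy
  have hcancel : (1 - y) ^ κ * (1 - y) ^ (-κ) = 1 := by
    rw [← rpow_add hy', add_neg_cancel, rpow_zero]
  calc 1 - (1 - y) ^ κ * (1 - a) ^ (-κ)
      = (1 - y) ^ κ * ((1 - y) ^ (-κ) - (1 - a) ^ (-κ)) := by rw [mul_sub, hcancel]
    _ ≤ (1 - y) ^ κ * (κ * jacobiScale κ a y) :=
      mul_le_mul_of_nonneg_left (one_sub_rpow_neg_sub_le_mul_jacobiScale hκ ha h hy)
        (rpow_nonneg hy'.le κ)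

lemma one_sub_rpow_mul_jacobiScale_le (hκ : 0 < κ) (ha : 0 < a) (h₀ : a ≤ y₀) (h : y₀ ≤ y)
    (hy : y < 1) :
    (1 - y) ^ κ * (κ * jacobiScale κ a y) ≤ (1 - y) ^ κ * (κ * jacobiScale κ a y₀) + y₀⁻¹ := by
  have hy' : 0 < 1 - y := sub_pos.2 hy
  have hy₀ : 0 < y₀ := ha.trans_le h₀
  have hcancel : (1 - y) ^ κ * (1 - y) ^ (-κ) = 1 := by
    rw [← rpow_add hy', add_neg_cancel, rpow_zero]
  have htail : κ * jacobiScale κ y₀ y ≤ y₀⁻¹ * (1 - y) ^ (-κ) :=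
    (mul_jacobiScale_le_inv_mul hκ hy₀ h hy).trans <| mul_le_mul_of_nonneg_left
      (sub_le_self _ (rpow_nonneg (by linarith) _)) (inv_nonneg.2 hy₀.le)
  calc (1 - y) ^ κ * (κ * jacobiScale κ a y)
      = (1 - y) ^ κ * (κ * jacobiScale κ a y₀) + (1 - y) ^ κ * (κ * jacobiScale κ y₀ y) := by
        rw [← jacobiScale_add ha h₀ h hy]; ring
    _ ≤ (1 - y) ^ κ * (κ * jacobiScale κ a y₀) + (1 - y) ^ κ * (y₀⁻¹ * (1 - y) ^ (-κ)) := by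
        gcongr
    _ = (1 - y) ^ κ * (κ * jacobiScale κ a y₀) + y₀⁻¹ := by
        rw [mul_left_comm _ y₀⁻¹, hcancel, mul_one]

end Bounds

lemma tendsto_one_sub_rpow_nhdsLT_one {κ : ℝ} (hκ : 0 < κ) :
    Tendsto (fun y : ℝ => (1 - y) ^ κ) (𝓝[<] 1) (𝓝 0) := by
  have : Continuous fun y : ℝ => (1 - y) ^ κ :=
    (continuous_const.sub continuous_id).rpow_const fun _ => Or.inr hκ.le
  exact (this.tendsto' 1 0 (by simp [hκ.ne'])).mono_left nhdsWithin_le_nhds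

theorem tendsto_one_sub_rpow_mul_jacobiScale {κ a : ℝ} (hκ : 0 < κ) (ha : a ∈ Ioo 0 1) :
    Tendsto (fun y => (1 - y) ^ κ * (κ * jacobiScale κ a y)) (𝓝[<] 1) (𝓝 1) := by
  have h0 := tendsto_one_sub_rpow_nhdsLT_one hκ
  refine tendsto_order.2 ⟨fun c hc => ?_, fun c hc => ?_⟩
  · have hlow : Tendsto (fun y => 1 - (1 - y) ^ κ * (1 - a) ^ (-κ)) (𝓝[<] 1) (𝓝 1) := by
      simpa using tendsto_const_nhds.sub (h0.mul_const ((1 - a) ^ (-κ)))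
    filter_upwards [hlow.eventually (lt_mem_nhds hc), Ioo_mem_nhdsLT ha.2] with y hcy hy
    exact hcy.trans_le (one_sub_le_one_sub_rpow_mul_jacobiScale hκ ha.1 hy.1.le hy.2)
  · have hinv : ∀ᶠ y₀ in 𝓝[<] (1 : ℝ), y₀⁻¹ < c :=
      ((tendsto_inv₀ one_ne_zero).mono_left nhdsWithin_le_nhds).eventually
        (gt_mem_nhds (by rwa [inv_one]))
    obtain ⟨y₀, hy₀c, hy₀⟩ := (hinv.and (Ioo_mem_nhdsLT ha.2)).exists
    have hup : Tendsto (fun y => (1 - y) ^ κ * (κ * jacobiScale κ a y₀) + y₀⁻¹) (𝓝[<] 1)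
        (𝓝 y₀⁻¹) := by
      simpa using (h0.mul_const (κ * jacobiScale κ a y₀)).add_const y₀⁻¹
    filter_upwards [hup.eventually (gt_mem_nhds hy₀c), Ioo_mem_nhdsLT hy₀.2] with y hcy hy
    exact (one_sub_rpow_mul_jacobiScale_le hκ ha.1 hy₀.1.le hy.1.le hy.2).trans_lt hcy

/-- With `S y = ∫_{α_κ}^{y} dx / (x (1-x)^{1+κ})`, `α_κ = 1/(4+2κ)`,
we have `y/(1-y) ~ (κ S(y))^{1/κ}` as `y → 1⁻`. -/
theorem stmt1 (κ : ℝ) (hκ : 0 < κ) :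
    Tendsto (fun y : ℝ =>
        (y / (1 - y)) /
          (κ * ∫ x in (1 / (4 + 2 * κ))..y, 1 / (x * (1 - x) ^ (1 + κ))) ^ (1 / κ))
      (nhdsWithin 1 (Set.Iio 1)) (nhds 1) := by
  have hα : 1 / (4 + 2 * κ) ∈ Ioo 0 1 :=
    ⟨by positivity, by rw [div_lt_one (by positivity)]; linarith⟩
  have hS := (tendsto_one_sub_rpow_mul_jacobiScale hκ hα).rpow_const (p := 1 / κ)
    (Or.inr (by positivity))
  rw [one_rpow] at hS
  have hid : Tendsto (fun y : ℝ => y) (𝓝[<] 1) (𝓝 1) :=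
    tendsto_nhdsWithin_of_tendsto_nhds tendsto_id
  have hlim := hid.div hS one_ne_zero
  rw [div_one] at hlim
  refine hlim.congr' ?_
  filter_upwards [Ioo_mem_nhdsLT hα.2] with y hy
  rw [Pi.div_apply, div_div, mul_rpow (rpow_nonneg (sub_pos.2 hy.2).le κ)
    (mul_nonneg hκ.le (jacobiScale_nonneg hα.1 hy.1.le hy.2)), one_div κ,
    rpow_rpow_inv (sub_pos.2 hy.2).le hκ.ne']
  rfl
end

section
/- Under the assumptions of the previous lemma (F defined by A_∞ − A(F(r)) = e^{−κr/2}), for every ε > 0, almost surely for all sufficiently large r, (1 − ε) r ≤ F(r) ≤ (1 + ε) r. -/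
/-!
Write `T x = A_∞ - A(x) = ∫_x^∞ e^{W_κ}`, so that `T (F r) = e^{-κr/2}`. Markov's inequality
for exponential moments of Gaussians and Borel–Cantelli show that almost surely, for all large
integers `n`, `|W n| < δ (n + 1)` and `∫_0^1 e^{±(W (n + s) - W n)} ds < e^{δ (n + 1)}`; by
Jensen's inequality this pins `∫_n^{n+1} e^W` between `e^{-2δ(n+1)}` and `e^{2δ(n+1)}`.
Summing a geometric series then gives `e^{-(κ/2 + 2δ) x - C} ≤ T x ≤ e^{C - (κ/2 - 2δ) x}`
for large `x`, and evaluating at `x = F r` gives `(1 - ε) r ≤ F r ≤ (1 + ε) r` once `δ` is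
small compared with `κ ε`.
-/

open MeasureTheory ProbabilityTheory Real Filter Set
open scoped NNReal ENNReal Topology

/-- A (two-sided, when indexed by all of `ℝ`) standard Brownian motion:
continuous paths, `W 0 = 0`, increments `W t - W s` Gaussian `N(0, t-s)` for `s ≤ t`,
and independent increments along any monotone sequence of times. -/
def IsBrownianMotion {Ω : Type*} [MeasureSpace Ω] (W : ℝ → Ω → ℝ) : Prop :=
  (∀ ω, W 0 ω = 0) ∧
  (∀ ω, Continuous fun t => W t ω) ∧
  (∀ s t : ℝ, s ≤ t →
    Measure.map (fun ω => W t ω - W s ω) ℙ = gaussianReal 0 (Real.toNNReal (t - s))) ∧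
  (∀ (n : ℕ) (t : ℕ → ℝ), Monotone t →
    iIndepFun
      (fun i : Fin n => fun ω => W (t (i + 1)) ω - W (t i) ω) ℙ)

lemma exp_integral_le_integral_exp {f : ℝ → ℝ} (hf : Continuous f) :
    exp (∫ s in (0:ℝ)..1, f s) ≤ ∫ s in (0:ℝ)..1, exp (f s) := by
  have h := convexOn_exp.map_set_average_le continuousOn_exp isClosed_univ
    (μ := volume) (t := Ioc (0:ℝ) 1) (by simp) (by simp) (by simp) hf.integrableOn_Ioc
    (continuous_exp.comp hf).integrableOn_Ioc
  simpa [setAverage_eq, intervalIntegral.integral_of_le zero_le_one] using h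

lemma integral_exp_bounds_of_increment_bounds {w : ℝ → ℝ} (hw : Continuous w) {a θ : ℝ}
    (ha : |w a| ≤ θ) (hpos : ∫ s in (0:ℝ)..1, exp (w (a + s) - w a) ≤ exp θ)
    (hneg : ∫ s in (0:ℝ)..1, exp (-(w (a + s) - w a)) ≤ exp θ) :
    exp (-(2 * θ)) ≤ ∫ u in a..a + 1, exp (w u) ∧ ∫ u in a..a + 1, exp (w u) ≤ exp (2 * θ) := by
  set Y := ∫ s in (0:ℝ)..1, exp (w (a + s) - w a)
  have hshift : ∫ u in a..a + 1, exp (w u) = exp (w a) * Y := by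
    rw [← intervalIntegral.integral_const_mul]
    simp_rw [← exp_add, add_sub_cancel]
    simpa using (intervalIntegral.integral_comp_add_left (fun u => exp (w u)) a
      (a := 0) (b := 1)).symm
  have hcont : Continuous fun s => w (a + s) - w a := by fun_prop
  have hmean : -θ ≤ ∫ s in (0:ℝ)..1, (w (a + s) - w a) := by
    have := (exp_integral_le_integral_exp (f := fun s => -(w (a + s) - w a)) hcont.neg).trans
      hneg
    rw [intervalIntegral.integral_neg, exp_le_exp] at this
    linarith
  have hY : exp (-θ) ≤ Y := (exp_le_exp.2 hmean).trans (exp_integral_le_integral_exp hcont)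
  have hwa := abs_le.1 ha
  rw [hshift, two_mul, neg_add, exp_add, exp_add]
  constructor
  · exact mul_le_mul (exp_le_exp.2 hwa.1) hY (exp_pos _).le (exp_pos _).le
  · exact mul_le_mul (exp_le_exp.2 hwa.2) hpos (hY.trans' (exp_pos _).le) (exp_pos _).le

lemma integral_exp_sub_mul_bounds {w : ℝ → ℝ} (hw : Continuous w) {κ : ℝ} (hκ : 0 ≤ κ)
    (a : ℝ) :
    exp (-(κ * (a + 1) / 2)) * ∫ u in a..a + 1, exp (w u)
        ≤ ∫ u in a..a + 1, exp (w u - κ * u / 2) ∧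
      ∫ u in a..a + 1, exp (w u - κ * u / 2)
        ≤ exp (-(κ * a / 2)) * ∫ u in a..a + 1, exp (w u) := by
  have hle : a ≤ a + 1 := by linarith
  simp_rw [← intervalIntegral.integral_const_mul, ← exp_add]
  constructor
  · refine intervalIntegral.integral_mono_on hle
      (Continuous.intervalIntegrable (by fun_prop) _ _)
      (Continuous.intervalIntegrable (by fun_prop) _ _) fun u hu => ?_
    rw [exp_le_exp]; nlinarith [hu.2]
  · refine intervalIntegral.integral_mono_on hle
      (Continuous.intervalIntegrable (by fun_prop) _ _)
      (Continuous.intervalIntegrable (by fun_prop) _ _) fun u hu => ?_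
    rw [exp_le_exp]; nlinarith [hu.1]

lemma integral_exp_drift_bounds_of_increment_bounds {w : ℝ → ℝ} (hw : Continuous w)
    {κ δ a : ℝ} (hκ : 0 ≤ κ) (ha : |w a| ≤ δ * (a + 1))
    (hpos : ∫ s in (0:ℝ)..1, exp (w (a + s) - w a) ≤ exp (δ * (a + 1)))
    (hneg : ∫ s in (0:ℝ)..1, exp (-(w (a + s) - w a)) ≤ exp (δ * (a + 1))) :
    exp (-((κ / 2 + 2 * δ) * (a + 1))) ≤ ∫ u in a..a + 1, exp (w u - κ * u / 2) ∧
      ∫ u in a..a + 1, exp (w u - κ * u / 2) ≤ exp (2 * δ - (κ / 2 - 2 * δ) * a) := by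
  obtain ⟨hlo, hhi⟩ := integral_exp_bounds_of_increment_bounds hw ha hpos hneg
  obtain ⟨hwlo, hwhi⟩ := integral_exp_sub_mul_bounds hw hκ a
  constructor
  · calc exp (-((κ / 2 + 2 * δ) * (a + 1)))
        = exp (-(κ * (a + 1) / 2)) * exp (-(2 * (δ * (a + 1)))) := by rw [← exp_add]; ring_nf
      _ ≤ _ := (mul_le_mul_of_nonneg_left hlo (exp_pos _).le).trans hwlo
  · calc _ ≤ exp (-(κ * a / 2)) * exp (2 * (δ * (a + 1))) :=
          hwhi.trans (mul_le_mul_of_nonneg_left hhi (exp_pos _).le)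
      _ = _ := by rw [← exp_add]; ring_nf

section Antitone

variable {T : ℝ → ℝ}

lemma Antitone.exists_le_exp_of_sub_le (hT : Antitone T) (hT0 : Tendsto T atTop (𝓝 0))
    {c α : ℝ} (hα : 0 < α) {N : ℕ} (hstep : ∀ n : ℕ, N ≤ n → T n - T (n + 1) ≤ exp (c - α * n)) :
    ∃ C, ∀ x : ℝ, N ≤ x → T x ≤ exp (C - α * x) := by
  set q := exp (-α)
  have hq1 : q < 1 := exp_lt_one_iff.2 (neg_lt_zero.2 hα)
  have hnat : ∀ n : ℕ, N ≤ n → T n ≤ exp (c - α * n) * (1 - q)⁻¹ := by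
    intro n hn
    have hpartial : ∀ K : ℕ, T n - T (n + K) ≤ exp (c - α * n) * (1 - q)⁻¹ := by
      intro K
      calc T n - T (n + K) = ∑ k ∈ Finset.range K, (T (n + k) - T (n + k + 1)) := by
            simpa [add_assoc] using (Finset.sum_range_sub' (fun k : ℕ => T (n + k)) K).symm
        _ ≤ ∑ k ∈ Finset.range K, exp (c - α * n) * q ^ k := by
            refine Finset.sum_le_sum fun k _ => ?_
            have := hstep (n + k) (by omega)
            push_cast at this
            refine this.trans_eq ?_
            rw [← exp_nat_mul, ← exp_add]; ring_nf
        _ ≤ exp (c - α * n) * (1 - q)⁻¹ := by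
            rw [← Finset.mul_sum]
            refine mul_le_mul_of_nonneg_left ?_ (exp_pos _).le
            simpa [← Finset.range_eq_Ico] using
              geom_sum_Ico_le_of_lt_one (m := 0) (n := K) (exp_pos (-α)).le hq1
    have hlim : Tendsto (fun K : ℕ => T n - T (n + K)) atTop (𝓝 (T n - 0)) :=
      tendsto_const_nhds.sub (hT0.comp
        (tendsto_atTop_add_const_left _ _ tendsto_natCast_atTop_atTop))
    simpa using le_of_tendsto' hlim hpartial
  refine ⟨c + α - log (1 - q), fun x hx => ?_⟩
  have hx0 : 0 ≤ x := le_trans (Nat.cast_nonneg N) hx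
  calc T x ≤ T ⌊x⌋₊ := hT (Nat.floor_le hx0)
    _ ≤ exp (c - α * ⌊x⌋₊) * (1 - q)⁻¹ := hnat _ (Nat.le_floor hx)
    _ ≤ exp (c + α - α * x) * (1 - q)⁻¹ := by
        refine mul_le_mul_of_nonneg_right (exp_le_exp.2 ?_) (inv_nonneg.2 (by linarith))
        nlinarith [mul_lt_mul_of_pos_left (Nat.lt_floor_add_one x) hα]
    _ = exp (c + α - log (1 - q) - α * x) := by
        rw [sub_right_comm, exp_sub _ (log _), exp_log (by linarith), div_eq_mul_inv]

lemma Antitone.exp_le_of_le_sub (hT : Antitone T) (hT0 : Tendsto T atTop (𝓝 0)) {β : ℝ}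
    (hβ : 0 ≤ β) {N : ℕ} (hstep : ∀ n : ℕ, N ≤ n → exp (-(β * (n + 1))) ≤ T n - T (n + 1))
    (x : ℝ) (hx : N ≤ x) : exp (-(β * x + 2 * β)) ≤ T x := by
  have hx0 : 0 ≤ x := le_trans (Nat.cast_nonneg N) hx
  have hceil := Nat.ceil_lt_add_one hx0
  calc exp (-(β * x + 2 * β)) ≤ exp (-(β * (⌈x⌉₊ + 1))) := by
        rw [exp_le_exp]; nlinarith
    _ ≤ T ⌈x⌉₊ - T (⌈x⌉₊ + 1) := hstep _ (by exact_mod_cast hx.trans (Nat.le_ceil x))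
    _ ≤ T ⌈x⌉₊ := by linarith [hT.le_of_tendsto hT0 (⌈x⌉₊ + 1)]
    _ ≤ T x := hT (Nat.le_ceil x)

lemma Antitone.eventually_le_of_exp_bounds (hT : Antitone T) {x₀ α β C₁ C₂ l : ℝ}
    (hl : 0 < l) (hlow : ∀ x, x₀ ≤ x → exp (-(β * x + C₁)) ≤ T x)
    (hup : ∀ x, x₀ ≤ x → T x ≤ exp (C₂ - α * x))
    {f : ℝ → ℝ} (hf : ∀ r, 0 < r → T (f r) = exp (-(l * r))) :
    ∀ᶠ r in atTop, l * r ≤ β * f r + C₁ ∧ α * f r ≤ l * r + C₂ := by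
  have hpos : 0 < T x₀ := (exp_pos _).trans_le (hlow x₀ le_rfl)
  have hsmall : ∀ᶠ r in atTop, exp (-(l * r)) < T x₀ :=
    (tendsto_exp_atBot.comp (tendsto_neg_atTop_atBot.comp
      (tendsto_id.const_mul_atTop hl))).eventually_lt_const hpos
  filter_upwards [hsmall, eventually_gt_atTop 0] with r hr hr0
  have hx : x₀ ≤ f r := by
    by_contra! h
    linarith [hT h.le, hf r hr0]
  constructor
  · have := (hlow _ hx).trans_eq (hf r hr0)
    rw [exp_le_exp] at this; linarith
  · have := (hf r hr0).symm.trans_le (hup _ hx)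
    rw [exp_le_exp] at this; linarith

end Antitone

lemma eventually_mul_le_of_eventually_le {f : ℝ → ℝ} {p q c θ : ℝ} (hq : 0 < q)
    (hθ : θ * q < p) (h : ∀ᶠ r in atTop, p * r ≤ q * f r + c) : ∀ᶠ r in atTop, θ * r ≤ f r := by
  filter_upwards [h, eventually_ge_atTop (c / (p - θ * q))] with r hr hr'
  rw [div_le_iff₀ (by linarith)] at hr'
  nlinarith

theorem eventually_mul_le_of_tail_eq {w : ℝ → ℝ} (hw : Continuous w) {κ δ ε : ℝ}
    (hκ : 0 < κ) (hδ : 0 ≤ δ) (hlow : (1 - ε) * (κ / 2 + 2 * δ) < κ / 2)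
    (hup : κ / 2 < (1 + ε) * (κ / 2 - 2 * δ))
    (hint : IntegrableOn (fun u => exp (w u - κ * u / 2)) (Ioi 0)) {f : ℝ → ℝ}
    (hf : ∀ r, 0 < r → (∫ u in Ioi (0:ℝ), exp (w u - κ * u / 2))
      - ∫ u in (0:ℝ)..f r, exp (w u - κ * u / 2) = exp (-κ * r / 2))
    {N : ℕ} (hgood : ∀ n : ℕ, N ≤ n → |w n| ≤ δ * (n + 1) ∧
      ∫ s in (0:ℝ)..1, exp (w (n + s) - w n) ≤ exp (δ * (n + 1)) ∧
      ∫ s in (0:ℝ)..1, exp (-(w (n + s) - w n)) ≤ exp (δ * (n + 1))) :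
    ∃ r₀, ∀ r ≥ r₀, (1 - ε) * r ≤ f r ∧ f r ≤ (1 + ε) * r := by
  set g := fun u => exp (w u - κ * u / 2)
  set T : ℝ → ℝ := fun x => (∫ u in Ioi (0:ℝ), g u) - ∫ u in (0:ℝ)..x, g u
  have hgc : Continuous g := by fun_prop
  have hα : 0 < κ / 2 - 2 * δ := by nlinarith
  have hβ : 0 < κ / 2 + 2 * δ := by linarith
  have hsub : ∀ a b, T a - T b = ∫ u in a..b, g u := fun a b => by
    rw [sub_sub_sub_cancel_left, intervalIntegral.integral_interval_sub_left
      (hgc.intervalIntegrable _ _) (hgc.intervalIntegrable _ _)]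
  have hT : Antitone T := fun a b hab => sub_nonneg.1 <|
    (hsub a b).symm ▸ intervalIntegral.integral_nonneg hab fun u _ => (exp_pos _).le
  have hT0 : Tendsto T atTop (𝓝 0) := by
    have := (tendsto_const_nhds (x := ∫ u in Ioi (0:ℝ), g u)).sub
      (intervalIntegral_tendsto_integral_Ioi 0 hint tendsto_id)
    rwa [sub_self] at this
  have hblock : ∀ n : ℕ, N ≤ n → exp (-((κ / 2 + 2 * δ) * (n + 1))) ≤ T n - T (n + 1) ∧
      T n - T (n + 1) ≤ exp (2 * δ - (κ / 2 - 2 * δ) * n) := fun n hn => by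
    obtain ⟨hwn, hpos, hneg⟩ := hgood n hn
    rw [hsub]
    exact integral_exp_drift_bounds_of_increment_bounds hw hκ.le hwn hpos hneg
  obtain ⟨C, hC⟩ := hT.exists_le_exp_of_sub_le hT0 hα fun n hn => (hblock n hn).2
  have hlowT := hT.exp_le_of_le_sub hT0 hβ.le fun n hn => (hblock n hn).1
  have hev := hT.eventually_le_of_exp_bounds (half_pos hκ) hlowT hC
    fun r hr => (hf r hr).trans (by ring_nf)
  have hlower := eventually_mul_le_of_eventually_le hβ hlow (hev.mono fun r h => h.1)
  have hupper := eventually_mul_le_of_eventually_le (f := fun r => -f r) (p := -(κ / 2)) (c := C)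
    hα (θ := -(1 + ε)) (by linarith) (hev.mono fun r h => by linarith [h.2])
  obtain ⟨r₀, hr₀⟩ := eventually_atTop.1 (hlower.and hupper)
  exact ⟨r₀, fun r hr => ⟨(hr₀ r hr).1, by linarith [(hr₀ r hr).2]⟩⟩

section Probability

variable {Ω : Type*} {mΩ : MeasurableSpace Ω} {μ : Measure Ω}

lemma lintegral_ofReal_exp_mul_of_map_eq_gaussianReal {X : Ω → ℝ} {v : ℝ≥0}
    (hX : μ.map X = gaussianReal 0 v) (t : ℝ) :
    ∫⁻ ω, ENNReal.ofReal (exp (t * X ω)) ∂μ = ENNReal.ofReal (exp (v * t ^ 2 / 2)) := by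
  have hXm : AEMeasurable X μ := aemeasurable_of_map_neZero (by rw [hX]; infer_instance)
  rw [← lintegral_map' (f := fun x => ENNReal.ofReal (exp (t * x))) (by fun_prop) hXm, hX,
    ← ofReal_integral_eq_lintegral_ofReal (integrable_exp_mul_gaussianReal t)
      (ae_of_all _ fun _ => (exp_pos _).le)]
  simpa [mgf] using
    congrArg ENNReal.ofReal (congrFun (mgf_fun_id_gaussianReal (μ := 0) (v := v)) t)

lemma ae_eventually_lt_ofReal_exp {Z : ℕ → Ω → ℝ≥0∞} (hZ : ∀ n, AEMeasurable (Z n) μ)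
    {b c : ℕ → ℝ} (hb : ∀ n, ∫⁻ ω, Z n ω ∂μ ≤ ENNReal.ofReal (exp (b n)))
    (hbc : Summable fun n => exp (b n - c n)) :
    ∀ᵐ ω ∂μ, ∀ᶠ n in atTop, Z n ω < ENNReal.ofReal (exp (c n)) := by
  have hmarkov : ∀ n, μ {ω | ENNReal.ofReal (exp (c n)) ≤ Z n ω}
      ≤ ENNReal.ofReal (exp (b n - c n)) := fun n =>
    calc _ ≤ (∫⁻ ω, Z n ω ∂μ) / ENNReal.ofReal (exp (c n)) :=
          meas_ge_le_lintegral_div (hZ n) (by simp [exp_pos]) ENNReal.ofReal_ne_top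
      _ ≤ ENNReal.ofReal (exp (b n)) / ENNReal.ofReal (exp (c n)) := by gcongr; exact hb n
      _ = _ := by rw [← ENNReal.ofReal_div_of_pos (exp_pos _), ← exp_sub]
  have hsum : ∑' n, μ {ω | ENNReal.ofReal (exp (c n)) ≤ Z n ω} ≠ ∞ := by
    refine ne_top_of_le_ne_top ?_ (ENNReal.tsum_le_tsum hmarkov)
    rw [← ENNReal.ofReal_tsum_of_nonneg (fun _ => (exp_pos _).le) hbc]
    exact ENNReal.ofReal_ne_top
  filter_upwards [ae_eventually_notMem hsum] with ω hω
  exact hω.mono fun n hn => not_le.1 hn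

lemma summable_exp_sub_mul_natCast {a b : ℝ} (hb : 0 < b) :
    Summable fun n : ℕ => exp (a - b * n) :=
  ((Real.summable_exp_nat_mul_iff.2 (neg_lt_zero.2 hb)).mul_left (exp a)).congr fun n => by
    rw [← exp_add]; ring_nf

lemma ae_eventually_abs_lt_of_map_eq_gaussianReal {X : ℕ → Ω → ℝ}
    (hX : ∀ n : ℕ, μ.map (X n) = gaussianReal 0 n) {δ : ℝ} (hδ : 0 < δ) :
    ∀ᵐ ω ∂μ, ∀ᶠ n in atTop, |X n ω| < δ * (n + 1) := by
  have hone_sided : ∀ t : ℝ, t ≠ 0 →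
      ∀ᵐ ω ∂μ, ∀ᶠ n : ℕ in atTop, t * X n ω < t ^ 2 * (n + 1) := by
    intro t ht
    have ht2 : 0 < t ^ 2 := by positivity
    have hXm : ∀ n, AEMeasurable (X n) μ := fun n =>
      aemeasurable_of_map_neZero (by rw [hX]; infer_instance)
    have := ae_eventually_lt_ofReal_exp (μ := μ)
      (Z := fun n ω => ENNReal.ofReal (exp (t * X n ω))) (fun n => by fun_prop)
      (b := fun n => n * t ^ 2 / 2) (c := fun n => t ^ 2 * (n + 1))
      (fun n => by simp [lintegral_ofReal_exp_mul_of_map_eq_gaussianReal (hX n)])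
      ((summable_exp_sub_mul_natCast (a := -t ^ 2) (half_pos ht2)).congr fun n => by ring_nf)
    filter_upwards [this] with ω hω
    exact hω.mono fun n hn => by
      simpa [ENNReal.ofReal_lt_ofReal_iff (exp_pos _)] using hn
  filter_upwards [hone_sided δ hδ.ne', hone_sided (-δ) (neg_ne_zero.2 hδ.ne')] with ω h₁ h₂
  filter_upwards [h₁, h₂] with n hn₁ hn₂
  rw [abs_lt]
  constructor <;> nlinarith

lemma lintegral_Ioc_ofReal_exp {φ : ℝ → ℝ} (hφ : Continuous φ) :
    ∫⁻ s in Ioc (0:ℝ) 1, ENNReal.ofReal (exp (φ s))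
      = ENNReal.ofReal (∫ s in (0:ℝ)..1, exp (φ s)) := by
  rw [intervalIntegral.integral_of_le zero_le_one, ofReal_integral_eq_lintegral_ofReal
    (f := fun s => exp (φ s)) (by fun_prop : Continuous fun s => exp (φ s)).integrableOn_Ioc
    (ae_of_all _ fun _ => (exp_pos _).le)]

lemma ae_eventually_integral_exp_increment_lt [SFinite μ] {W : ℝ → Ω → ℝ}
    (hc : ∀ ω, Continuous fun t => W t ω)
    (hV : ∃ V : ℝ → Ω → ℝ, Measurable (Function.uncurry V) ∧ ∀ᵐ ω ∂μ, ∀ t, V t ω = W t ω)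
    (hinc : ∀ (n : ℕ) (s : ℝ), 0 ≤ s →
      μ.map (fun ω => W (n + s) ω - W n ω) = gaussianReal 0 s.toNNReal)
    (t : ℝ) {δ : ℝ} (hδ : 0 < δ) :
    ∀ᵐ ω ∂μ, ∀ᶠ n : ℕ in atTop,
      ∫ s in (0:ℝ)..1, exp (t * (W (n + s) ω - W n ω)) < exp (δ * (n + 1)) := by
  obtain ⟨V, hVm, hVW⟩ := hV
  have hker : ∀ n : ℕ, Measurable fun p : Ω × ℝ =>
      ENNReal.ofReal (exp (t * (V (n + p.2) p.1 - V n p.1))) := fun n => by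
    have h₁ : Measurable fun p : Ω × ℝ => V (n + p.2) p.1 :=
      hVm.comp (by fun_prop : Measurable fun p : Ω × ℝ => ((n:ℝ) + p.2, p.1))
    have h₂ : Measurable fun p : Ω × ℝ => V n p.1 :=
      hVm.comp (by fun_prop : Measurable fun p : Ω × ℝ => ((n:ℝ), p.1))
    fun_prop
  have hmoment : ∀ (n : ℕ), ∫⁻ ω, (∫⁻ s in Ioc (0:ℝ) 1,
      ENNReal.ofReal (exp (t * (V (n + s) ω - V n ω)))) ∂μ
        ≤ ENNReal.ofReal (exp (t ^ 2 / 2)) := by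
    intro n
    rw [lintegral_lintegral_swap (hker n).aemeasurable]
    calc _ ≤ ∫⁻ _ in Ioc (0:ℝ) 1, ENNReal.ofReal (exp (t ^ 2 / 2)) := by
          refine setLIntegral_mono' measurableSet_Ioc fun s hs => ?_
          have hVW_s : ∫⁻ ω, ENNReal.ofReal (exp (t * (V (n + s) ω - V n ω))) ∂μ
              = ∫⁻ ω, ENNReal.ofReal (exp (t * (W (n + s) ω - W n ω))) ∂μ :=
            lintegral_congr_ae (hVW.mono fun ω h => by simp only [h])
          rw [hVW_s, lintegral_ofReal_exp_mul_of_map_eq_gaussianReal (hinc n s hs.1.le)]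
          gcongr
          rw [Real.coe_toNNReal _ hs.1.le]
          nlinarith [hs.2, sq_nonneg t]
      _ = _ := by simp
  have := ae_eventually_lt_ofReal_exp (fun n => (hker n).lintegral_prod_right'.aemeasurable)
    hmoment (c := fun n => δ * (n + 1))
    ((summable_exp_sub_mul_natCast (a := t ^ 2 / 2 - δ) hδ).congr fun n => by ring_nf)
  filter_upwards [this, hVW] with ω hω hVWω
  refine hω.mono fun n hn => ?_
  simp only [hVWω] at hn
  rwa [lintegral_Ioc_ofReal_exp (by fun_prop), ENNReal.ofReal_lt_ofReal_iff (exp_pos _)] at hn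

end Probability

-- `IsBrownianMotion` does not make `(t, ω) ↦ W t ω` measurable; Tonelli is applied to this version.
lemma exists_measurable_uncurry_ae_eq {Ω : Type*} {mΩ : MeasurableSpace Ω} {μ : Measure Ω}
    {X : ℝ → Ω → ℝ} (hc : ∀ ω, Continuous fun t => X t ω)
    (hm : ∀ q : ℚ, AEMeasurable (X q) μ) :
    ∃ V : ℝ → Ω → ℝ, Measurable (Function.uncurry V) ∧ ∀ᵐ ω ∂μ, ∀ t, V t ω = X t ω := by
  set N := toMeasurable μ {ω | ¬ ∀ q : ℚ, X q ω = (hm q).mk _ ω}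
  have hN : μ N = 0 := by
    rw [measure_toMeasurable]
    exact ae_iff.1 (ae_all_iff.2 fun q => (hm q).ae_eq_mk)
  have hgood : ∀ ω ∉ N, ∀ q : ℚ, X q ω = (hm q).mk _ ω := fun ω hω => by
    by_contra h
    exact hω (subset_toMeasurable _ _ h)
  set V : ℝ → Ω → ℝ := fun t => Nᶜ.indicator (X t)
  have hVc : ∀ ω, Continuous fun t => V t ω := by
    intro ω
    by_cases hω : ω ∈ N
    · simpa [V, hω] using continuous_const
    · simpa [V, hω] using hc ω
  have hVq : ∀ q : ℚ, Measurable (V q) := fun q => by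
    have : V q = Nᶜ.indicator ((hm q).mk _) := by
      ext ω
      by_cases hω : ω ∈ N <;> simp [V, hω, hgood ω]
    rw [this]
    exact (hm q).measurable_mk.indicator (measurableSet_toMeasurable _ _).compl
  have hVt : ∀ t, Measurable (V t) := fun t => by
    obtain ⟨u, -, -, hu⟩ := Rat.denseRange_cast.exists_seq_strictMono_tendsto Rat.cast_mono t
    exact measurable_of_tendsto_metrizable (fun k => hVq (u k))
      (tendsto_pi_nhds.2 fun ω => ((hVc ω).tendsto t).comp hu)
  refine ⟨V, measurable_uncurry_of_continuous_of_measurable hVc hVt, ?_⟩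
  filter_upwards [measure_eq_zero_iff_ae_notMem.1 hN] with ω hω t
  simp [V, hω]

section BrownianMotion

variable {Ω : Type*} [MeasureSpace Ω] {W : ℝ → Ω → ℝ}

lemma IsBrownianMotion.aemeasurable (hW : IsBrownianMotion W) (t : ℝ) :
    AEMeasurable (W t) ℙ := by
  obtain ⟨hW0, -, hWmap, -⟩ := hW
  have hinc : ∀ s u, s ≤ u → AEMeasurable (fun ω => W u ω - W s ω) ℙ := fun s u hsu =>
    aemeasurable_of_map_neZero (by rw [hWmap s u hsu]; infer_instance)
  rcases le_total 0 t with ht | ht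
  · simpa [hW0] using hinc 0 t ht
  · simpa [hW0, Pi.neg_def] using (hinc t 0 ht).neg

lemma IsBrownianMotion.ae_eventually_integer_time_bounds [SFinite (ℙ : Measure Ω)]
    (hW : IsBrownianMotion W) {δ : ℝ} (hδ : 0 < δ) :
    ∀ᵐ ω, ∀ᶠ n : ℕ in atTop, |W n ω| < δ * (n + 1) ∧
      ∫ s in (0:ℝ)..1, exp (W (n + s) ω - W n ω) < exp (δ * (n + 1)) ∧
      ∫ s in (0:ℝ)..1, exp (-(W (n + s) ω - W n ω)) < exp (δ * (n + 1)) := by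
  have hV := exists_measurable_uncurry_ae_eq hW.2.1 fun q => hW.aemeasurable q
  obtain ⟨hW0, hWc, hWmap, -⟩ := hW
  have hpoint : ∀ n : ℕ, (ℙ : Measure Ω).map (W n) = gaussianReal 0 n := fun n => by
    simpa [hW0] using hWmap 0 n (Nat.cast_nonneg n)
  have hinc : ∀ (n : ℕ) (s : ℝ), 0 ≤ s →
      (ℙ : Measure Ω).map (fun ω => W (n + s) ω - W n ω) = gaussianReal 0 s.toNNReal :=
    fun n s hs => by simpa using hWmap n (n + s) (by linarith)
  filter_upwards [ae_eventually_abs_lt_of_map_eq_gaussianReal hpoint hδ,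
    ae_eventually_integral_exp_increment_lt hWc hV hinc 1 hδ,
    ae_eventually_integral_exp_increment_lt hWc hV hinc (-1) hδ] with ω h₀ h₁ h₂
  filter_upwards [h₀, h₁, h₂] with n hn₀ hn₁ hn₂
  simp only [one_mul, neg_one_mul] at hn₁ hn₂
  exact ⟨hn₀, hn₁, hn₂⟩

end BrownianMotion

/-- In the setting of Lemma 2.1 (`F` defined by
`A_∞ - A(F(r)) = e^{-κr/2}`), for every `ε > 0`, almost surely, for all large `r`,
`(1-ε) r ≤ F(r) ≤ (1+ε) r`. -/
theorem stmt10 {Ω : Type*} [MeasureSpace Ω] [IsProbabilityMeasure (ℙ : Measure Ω)]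
    (W : ℝ → Ω → ℝ) (hW : IsBrownianMotion W) (κ : ℝ) (hκ : 0 < κ)
    (A : ℝ → Ω → ℝ) (hA : ∀ x ω, A x ω = ∫ u in (0:ℝ)..x, Real.exp (W u ω - κ * u / 2))
    (Ainf : Ω → ℝ)
    (hAinf : ∀ ω, Ainf ω = ∫ u in Set.Ioi (0:ℝ), Real.exp (W u ω - κ * u / 2))
    (hfin : ∀ᵐ ω ∂ℙ, IntegrableOn (fun u => Real.exp (W u ω - κ * u / 2)) (Set.Ioi 0))
    (F : ℝ → Ω → ℝ) (hF : ∀ r : ℝ, 0 < r → ∀ ω, Ainf ω - A (F r ω) ω = Real.exp (-κ * r / 2))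
    (ε : ℝ) (hε : 0 < ε) :
    ∀ᵐ ω ∂ℙ, ∃ r₀ : ℝ, ∀ r ≥ r₀, (1 - ε) * r ≤ F r ω ∧ F r ω ≤ (1 + ε) * r := by
  obtain ⟨δ, hδ, hlow, hup⟩ : ∃ δ > 0,
      (1 - ε) * (κ / 2 + 2 * δ) < κ / 2 ∧ κ / 2 < (1 + ε) * (κ / 2 - 2 * δ) := by
    have hm : 0 < min ε 1 := lt_min hε one_pos
    refine ⟨κ * min ε 1 / 16, by positivity, ?_, ?_⟩
    · nlinarith [min_le_left ε 1, mul_pos hκ hm, mul_pos (mul_pos hκ hm) hε]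
    · nlinarith [min_le_left ε 1, min_le_right ε 1, mul_pos hκ hm, mul_pos (mul_pos hκ hm) hε,
        mul_le_mul_of_nonneg_left (min_le_right ε 1) (mul_nonneg hκ.le hε.le)]
  filter_upwards [hfin, hW.ae_eventually_integer_time_bounds hδ] with ω hint hgood
  obtain ⟨N, hN⟩ := eventually_atTop.1 hgood
  refine eventually_mul_le_of_tail_eq (hW.2.1 ω) hκ hδ.le hlow hup hint
    (fun r hr => by rw [← hAinf, ← hA]; exact hF r hr ω) (N := N) fun n hn => ?_
  obtain ⟨h₀, h₁, h₂⟩ := hN n hn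
  exact ⟨h₀.le, h₁.le, h₂.le⟩
end

section
/- Let β̂ be a standard Brownian motion and Y a Jacobi process of dimension (2, 2+2κ) starting from 0, i.e., the solution of dY(t) = 2√(Y(t)(1−Y(t))) dβ̂(t) + [2 − (4+2κ)Y(t)] dt with Y(0) = 0, taking values in [0,1]. Set α_κ = 1/(4+2κ) and T_Y(α_κ) = inf{t > 0 : Y(t) = α_κ}. Then for every t ≥ 2α_κ, P(T_Y(α_κ) > t) ≤ 2 exp(−t/32). -/
/-!
Write `M` for the martingale part of `Y` and `V` for its quadratic variation. While `Y` has not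
reached `α = 1/(4+2κ)`, the drift `2 - (4+2κ) Y` is at least `1`, so over each time block of
length `8` the increment of `M` is at most `1 - 8 = -7`. On the other hand, conditionally on
the past, `E[(ΔM)²] = E[ΔV] ≤ 8` because `4Y(1-Y) ≤ 1`, so by Chebyshev's inequality a block with
`(ΔM)² ≥ 16` has conditional probability at most `1/2`. Hence the probability of not hitting `α`
during `⌊t/8⌋` consecutive blocks is at most `2^(-⌊t/8⌋) ≤ 2 exp(-t/32)`. This conditional
second-moment bound replaces the Dubins–Schwarz representation.
-/

open MeasureTheory ProbabilityTheory Real Filter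

/-- Martingale-problem characterization of the Jacobi process of dimension
`(2, 2+2κ)` started from 0: a continuous `[0,1]`-valued process `Y` with `Y 0 = 0`
such that, for some filtration, `M_t := Y_t - ∫_0^t (2 - (4+2κ) Y_s) ds` is a
martingale with quadratic variation `∫_0^t 4 Y_s (1 - Y_s) ds`. -/
def IsJacobi {Ω : Type*} [MeasureSpace Ω] (κ : ℝ) (Y : ℝ → Ω → ℝ) : Prop :=
  (∀ ω, Continuous fun t => Y t ω) ∧
  (∀ ω t, Y t ω ∈ Set.Icc (0:ℝ) 1) ∧
  (∀ ω, Y 0 ω = 0) ∧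
  ∃ ℱ : Filtration ℝ (inferInstance : MeasurableSpace Ω),
    Adapted ℱ Y ∧
    (∀ t, Integrable (Y t) ℙ) ∧
    (∀ s t : ℝ, 0 ≤ s → s ≤ t →
      (ℙ[(fun ω => Y t ω - ∫ u in (0:ℝ)..t, (2 - (4 + 2 * κ) * Y u ω))|ℱ s]
        =ᵐ[ℙ] fun ω => Y s ω - ∫ u in (0:ℝ)..s, (2 - (4 + 2 * κ) * Y u ω))) ∧
    (∀ s t : ℝ, 0 ≤ s → s ≤ t →
      (ℙ[(fun ω => (Y t ω - ∫ u in (0:ℝ)..t, (2 - (4 + 2 * κ) * Y u ω)) ^ 2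
            - ∫ u in (0:ℝ)..t, 4 * Y u ω * (1 - Y u ω))|ℱ s]
        =ᵐ[ℙ] fun ω => (Y s ω - ∫ u in (0:ℝ)..s, (2 - (4 + 2 * κ) * Y u ω)) ^ 2
            - ∫ u in (0:ℝ)..s, 4 * Y u ω * (1 - Y u ω)))

section Increments

variable {Ω : Type*} {m m0 : MeasurableSpace Ω} {μ : Measure Ω} [IsFiniteMeasure μ]
  {Ms Mt Vs Vt : Ω → ℝ} {B : Set Ω}

theorem setIntegral_sq_sub_eq_of_condExp (hm : m ≤ m0) (hMs : StronglyMeasurable[m] Ms)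
    (hMs2 : MemLp Ms 2 μ) (hMt2 : MemLp Mt 2 μ) (hVs : Integrable Vs μ) (hVt : Integrable Vt μ)
    (hmart : μ[Mt|m] =ᵐ[μ] Ms)
    (hqv : μ[fun ω => Mt ω ^ 2 - Vt ω|m] =ᵐ[μ] fun ω => Ms ω ^ 2 - Vs ω)
    (hB : MeasurableSet[m] B) :
    ∫ ω in B, (Mt ω - Ms ω) ^ 2 ∂μ = ∫ ω in B, (Vt ω - Vs ω) ∂μ := by
  have hBm : MeasurableSet B := hm B hB
  have hQt : Integrable (fun ω => Mt ω ^ 2 - Vt ω) μ := hMt2.integrable_sq.sub hVt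
  have hQs : Integrable (fun ω => Ms ω ^ 2 - Vs ω) μ := hMs2.integrable_sq.sub hVs
  have hMsMt : Integrable (fun ω => Ms ω * Mt ω) μ := hMs2.integrable_mul hMt2
  have hMsMs : Integrable (fun ω => Ms ω * Ms ω) μ := hMs2.integrable_mul hMs2
  have hsq : ∫ ω in B, (Mt ω ^ 2 - Vt ω) ∂μ = ∫ ω in B, (Ms ω ^ 2 - Vs ω) ∂μ := by
    rw [← setIntegral_condExp hm hQt hB]
    exact setIntegral_congr_ae hBm (hqv.mono fun ω h _ => h)
  have hcross : ∫ ω in B, Ms ω * Mt ω ∂μ = ∫ ω in B, Ms ω * Ms ω ∂μ := by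
    rw [← setIntegral_condExp hm hMsMt hB]
    refine setIntegral_congr_ae hBm ?_
    filter_upwards [condExp_mul_of_stronglyMeasurable_left hMs hMsMt (hMt2.integrable one_le_two),
      hmart] with ω h1 h2 _
    rw [← Pi.mul_def, h1, Pi.mul_apply, h2]
  have hQ : Integrable (fun ω => (Mt ω ^ 2 - Vt ω) - (Ms ω ^ 2 - Vs ω)) μ := hQt.sub hQs
  have hC : Integrable (fun ω => 2 * (Ms ω * Mt ω - Ms ω * Ms ω)) μ :=
    (hMsMt.sub hMsMs).const_mul 2
  have hQC : Integrable (fun ω => (Mt ω ^ 2 - Vt ω) - (Ms ω ^ 2 - Vs ω)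
      - 2 * (Ms ω * Mt ω - Ms ω * Ms ω)) μ := hQ.sub hC
  have hV : Integrable (fun ω => Vt ω - Vs ω) μ := hVt.sub hVs
  calc ∫ ω in B, (Mt ω - Ms ω) ^ 2 ∂μ
      = ∫ ω in B, ((Mt ω ^ 2 - Vt ω) - (Ms ω ^ 2 - Vs ω)
          - 2 * (Ms ω * Mt ω - Ms ω * Ms ω) + (Vt ω - Vs ω)) ∂μ := by
        congr with ω; ring
    _ = ∫ ω in B, (Vt ω - Vs ω) ∂μ := by
        rw [integral_add hQC.integrableOn hV.integrableOn,
          integral_sub hQ.integrableOn hC.integrableOn,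
          integral_sub hQt.integrableOn hQs.integrableOn, integral_const_mul,
          integral_sub hMsMt.integrableOn hMsMs.integrableOn, hsq, hcross]
        ring

theorem measureReal_inter_sq_sub_ge_le (hm : m ≤ m0) (hMs : StronglyMeasurable[m] Ms)
    (hMs2 : MemLp Ms 2 μ) (hMt2 : MemLp Mt 2 μ) (hVs : Integrable Vs μ) (hVt : Integrable Vt μ)
    (hmart : μ[Mt|m] =ᵐ[μ] Ms)
    (hqv : μ[fun ω => Mt ω ^ 2 - Vt ω|m] =ᵐ[μ] fun ω => Ms ω ^ 2 - Vs ω)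
    {c ε : ℝ} (hε : 0 < ε) (hV : ∀ ω, Vt ω - Vs ω ≤ c) (hB : MeasurableSet[m] B) :
    μ.real (B ∩ {ω | ε ≤ (Mt ω - Ms ω) ^ 2}) ≤ c / ε * μ.real B := by
  have hBm : MeasurableSet B := hm B hB
  have hsq : Integrable (fun ω => (Mt ω - Ms ω) ^ 2) μ := (hMt2.sub hMs2).integrable_sq
  have hcheb := mul_meas_ge_le_integral_of_nonneg (μ := μ.restrict B)
    (ae_of_all _ fun ω => sq_nonneg (Mt ω - Ms ω)) hsq.integrableOn ε
  rw [setIntegral_sq_sub_eq_of_condExp hm hMs hMs2 hMt2 hVs hVt hmart hqv hB,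
    measureReal_restrict_apply' hBm, Set.inter_comm] at hcheb
  have hVB : ∫ ω in B, (Vt ω - Vs ω) ∂μ ≤ c * μ.real B := by
    calc ∫ ω in B, (Vt ω - Vs ω) ∂μ ≤ ∫ _ in B, c ∂μ :=
          setIntegral_mono (hVt.sub hVs).integrableOn integrableOn_const hV
      _ = c * μ.real B := by rw [setIntegral_const, smul_eq_mul, mul_comm]
  rw [div_mul_eq_mul_div, le_div_iff₀ hε]
  linarith

end Increments

section Blocks

variable {Ω : Type*} {m0 : MeasurableSpace Ω} {μ : Measure Ω} [IsProbabilityMeasure μ]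

theorem measureReal_biInter_lt_le_pow {𝒢 : ℕ → MeasurableSpace Ω} {A : ℕ → Set Ω} {r : ℝ}
    (h𝒢 : Monotone 𝒢) (hr : 0 ≤ r) (hA : ∀ k, MeasurableSet[𝒢 (k + 1)] (A k))
    (hstep : ∀ k B, MeasurableSet[𝒢 k] B → μ.real (B ∩ A k) ≤ r * μ.real B) (n : ℕ) :
    μ.real (⋂ k < n, A k) ≤ r ^ n := by
  suffices MeasurableSet[𝒢 n] (⋂ k < n, A k) ∧ μ.real (⋂ k < n, A k) ≤ r ^ n from this.2
  induction n with
  | zero => simp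
  | succ n ih =>
    rw [Set.biInter_lt_succ]
    refine ⟨?_, ?_⟩
    · exact (h𝒢 n.le_succ _ ih.1).inter (hA n)
    · calc μ.real ((⋂ k < n, A k) ∩ A n) ≤ r * μ.real (⋂ k < n, A k) := hstep n _ ih.1
        _ ≤ r * r ^ n := mul_le_mul_of_nonneg_left ih.2 hr
        _ = r ^ (n + 1) := (pow_succ' r n).symm

theorem measureReal_biInter_sq_increment_le {ℱ : Filtration ℝ m0}
    {M V : ℝ → Ω → ℝ} (hM : ∀ s, 0 ≤ s → StronglyMeasurable[ℱ s] (M s))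
    (hM2 : ∀ s, 0 ≤ s → MemLp (M s) 2 μ) (hV : ∀ s, 0 ≤ s → Integrable (V s) μ)
    (hVinc : ∀ s u, 0 ≤ s → s ≤ u → ∀ ω, V u ω - V s ω ≤ u - s)
    (hmart : ∀ s u, 0 ≤ s → s ≤ u → μ[M u|ℱ s] =ᵐ[μ] M s)
    (hqv : ∀ s u, 0 ≤ s → s ≤ u →
      μ[fun ω => M u ω ^ 2 - V u ω|ℱ s] =ᵐ[μ] fun ω => M s ω ^ 2 - V s ω)
    {h ε : ℝ} (hh : 0 ≤ h) (hε : 0 < ε) (n : ℕ) :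
    μ.real (⋂ k < n, {ω | ε ≤ (M (h * (k + 1)) ω - M (h * k) ω) ^ 2}) ≤ (h / ε) ^ n := by
  have htime : ∀ k : ℕ, 0 ≤ h * k := fun k => by positivity
  have hle : ∀ k : ℕ, h * k ≤ h * (k + 1) := fun k => by nlinarith
  refine measureReal_biInter_lt_le_pow (𝒢 := fun k : ℕ => ℱ (h * k))
    (fun i j hij => ℱ.mono (by gcongr)) (by positivity) (fun k => ?_) (fun k B hB => ?_) n
  · have hnext : StronglyMeasurable[ℱ (h * (k + 1))] (M (h * (k + 1))) :=
      hM _ ((htime k).trans (hle k))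
    have hprev : StronglyMeasurable[ℱ (h * (k + 1))] (M (h * k)) :=
      (hM _ (htime k)).mono (ℱ.mono (hle k))
    rw [Nat.cast_succ]
    exact measurableSet_le measurable_const ((hnext.measurable.sub hprev.measurable).pow_const 2)
  · refine measureReal_inter_sq_sub_ge_le (ℱ.le _) (hM _ (htime k)) (hM2 _ (htime k))
      (hM2 _ ((htime k).trans (hle k))) (hV _ (htime k)) (hV _ ((htime k).trans (hle k)))
      (hmart _ _ (htime k) (hle k)) (hqv _ _ (htime k) (hle k)) hε (fun ω => ?_) hB
    linarith [hVinc _ _ (htime k) (hle k) ω]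

end Blocks

theorem MeasureTheory.Adapted.stronglyMeasurable_intervalIntegral_comp {Ω : Type*}
    {m0 : MeasurableSpace Ω} {ℱ : Filtration ℝ m0} {Y : ℝ → Ω → ℝ} (hY : Adapted ℱ Y)
    (hcont : ∀ ω, Continuous fun t => Y t ω) {g : ℝ → ℝ} (hg : Continuous g) {s : ℝ}
    (hs : 0 ≤ s) :
    StronglyMeasurable[ℱ s] fun ω => ∫ u in (0:ℝ)..s, g (Y u ω) := by
  -- Freezing the path after time `s` makes the integrand jointly measurable for `ℱ s`.
  have hjoint : @StronglyMeasurable (ℝ × Ω) ℝ _ (@Prod.instMeasurableSpace _ _ _ (ℱ s))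
      (Function.uncurry fun u ω => g (Y (min u s) ω)) :=
    @stronglyMeasurable_uncurry_of_continuous_of_stronglyMeasurable Ω ℝ ℝ _ _ _ _ _ _ _ (ℱ s) _
      (fun ω => hg.comp ((hcont ω).comp (continuous_id.min continuous_const)))
      (fun u => hg.comp_stronglyMeasurable
        ((hY (min u s)).stronglyMeasurable.mono (ℱ.mono (min_le_right u s))))
  convert @StronglyMeasurable.integral_prod_left ℝ Ω ℝ _ (ℱ s)
    (volume.restrict (Set.Ioc 0 s)) _ _ _ _ hjoint using 2 with ω
  rw [intervalIntegral.integral_of_le hs]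
  exact setIntegral_congr_fun measurableSet_Ioc fun u hu => by rw [min_eq_left hu.2]

theorem Continuous.lt_of_forall_Ioc_ne {f : ℝ → ℝ} (hf : Continuous f) {c t : ℝ} (h0 : f 0 < c)
    (hne : ∀ s ∈ Set.Ioc 0 t, f s ≠ c) : ∀ s ∈ Set.Icc 0 t, f s < c := by
  intro s hs
  by_contra! hcs
  obtain ⟨r, hr, hrc⟩ := intermediate_value_Icc hs.1 hf.continuousOn ⟨h0.le, hcs⟩
  have hr0 : r ≠ 0 := by rintro rfl; exact h0.ne hrc
  exact hne r ⟨lt_of_le_of_ne hr.1 (Ne.symm hr0), hr.2.trans hs.2⟩ hrc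

section Jacobi

variable {Ω : Type*} (κ : ℝ) (Y : ℝ → Ω → ℝ)

noncomputable def jacobiMartingalePart (t : ℝ) (ω : Ω) : ℝ :=
  Y t ω - ∫ u in (0:ℝ)..t, (2 - (4 + 2 * κ) * Y u ω)

noncomputable def jacobiQuadVariation (t : ℝ) (ω : Ω) : ℝ :=
  ∫ u in (0:ℝ)..t, 4 * Y u ω * (1 - Y u ω)

variable {κ Y} {ω : Ω} (hY01 : ∀ u, Y u ω ∈ Set.Icc (0:ℝ) 1)
include hY01

theorem abs_jacobiMartingalePart_le (t : ℝ) :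
    |jacobiMartingalePart κ Y t ω| ≤ 1 + (2 + |4 + 2 * κ|) * |t| := by
  have hdrift : ∀ u ∈ Set.uIoc 0 t, ‖2 - (4 + 2 * κ) * Y u ω‖ ≤ 2 + |4 + 2 * κ| := by
    intro u _
    obtain ⟨h0, h1⟩ := hY01 u
    calc ‖2 - (4 + 2 * κ) * Y u ω‖ ≤ |2| + |4 + 2 * κ| * |Y u ω| := by
          rw [Real.norm_eq_abs, ← abs_mul]; exact abs_sub _ _
      _ ≤ 2 + |4 + 2 * κ| := by
          rw [abs_two, abs_of_nonneg h0]; nlinarith [abs_nonneg (4 + 2 * κ)]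
  have hint := intervalIntegral.norm_integral_le_of_norm_le_const hdrift
  rw [Real.norm_eq_abs, sub_zero] at hint
  have hYt : |Y t ω| ≤ 1 := abs_le.mpr ⟨by linarith [(hY01 t).1], (hY01 t).2⟩
  exact (abs_sub _ _).trans (add_le_add hYt hint)

theorem jacobiQuadVariation_sub_le (hcont : Continuous fun u => Y u ω) (s t : ℝ) :
    jacobiQuadVariation Y t ω - jacobiQuadVariation Y s ω ≤ |t - s| := by
  have hbound : ∀ u ∈ Set.uIoc s t, ‖4 * Y u ω * (1 - Y u ω)‖ ≤ 1 := by
    intro u _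
    obtain ⟨h0, h1⟩ := hY01 u
    rw [Real.norm_eq_abs, abs_le]
    constructor <;> nlinarith [sq_nonneg (2 * Y u ω - 1)]
  have hint : Continuous fun u => 4 * Y u ω * (1 - Y u ω) := by fun_prop
  unfold jacobiQuadVariation
  rw [intervalIntegral.integral_interval_sub_left (hint.intervalIntegrable 0 t)
    (hint.intervalIntegrable 0 s)]
  simpa using (le_abs_self _).trans (intervalIntegral.norm_integral_le_of_norm_le_const hbound)

theorem jacobiMartingalePart_sub_le (hκ : 0 < 4 + 2 * κ) (hcont : Continuous fun u => Y u ω)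
    {a b : ℝ} (hab : a ≤ b) (hbelow : ∀ u ∈ Set.Icc a b, Y u ω < 1 / (4 + 2 * κ)) :
    jacobiMartingalePart κ Y b ω - jacobiMartingalePart κ Y a ω ≤ 1 - (b - a) := by
  have hdrift : Continuous fun u => 2 - (4 + 2 * κ) * Y u ω := by fun_prop
  have hint : b - a ≤ ∫ u in a..b, (2 - (4 + 2 * κ) * Y u ω) := by
    calc b - a = ∫ _ in a..b, (1 : ℝ) := by simp
      _ ≤ ∫ u in a..b, (2 - (4 + 2 * κ) * Y u ω) := by
        refine intervalIntegral.integral_mono_on hab intervalIntegrable_const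
          (hdrift.intervalIntegrable a b) fun u hu => ?_
        have := (lt_div_iff₀' hκ).mp (hbelow u hu)
        linarith
  have hsplit := intervalIntegral.integral_interval_sub_left (μ := volume)
    (hdrift.intervalIntegrable 0 b) (hdrift.intervalIntegrable 0 a)
  unfold jacobiMartingalePart
  linarith [(hY01 b).2, (hY01 a).1]

end Jacobi

theorem half_pow_floor_div_eight_le (t : ℝ) : (1 / 2 : ℝ) ^ ⌊t / 8⌋₊ ≤ 2 * exp (-t / 32) := by
  set n := ⌊t / 8⌋₊
  have hn : t / 8 < n + 1 := Nat.lt_floor_add_one _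
  have hlog : (1 / 4 : ℝ) ≤ log 2 := by linarith [log_two_gt_d9]
  calc (1 / 2 : ℝ) ^ n = 2 * exp (((n : ℝ) + 1) * -log 2) := by
        rw [← Nat.cast_succ, exp_nat_mul, exp_neg, exp_log two_pos, pow_succ]; ring
    _ ≤ 2 * exp (-t / 32) := by gcongr; nlinarith

theorem IsJacobi.measureReal_biInter_sq_increment_le {Ω : Type*} [MeasureSpace Ω]
    [IsProbabilityMeasure (ℙ : Measure Ω)] {κ : ℝ} {Y : ℝ → Ω → ℝ} (hY : IsJacobi κ Y)
    {h ε : ℝ} (hh : 0 ≤ h) (hε : 0 < ε) (n : ℕ) :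
    (ℙ : Measure Ω).real (⋂ k < n, {ω | ε ≤ (jacobiMartingalePart κ Y (h * (k + 1)) ω
      - jacobiMartingalePart κ Y (h * k) ω) ^ 2}) ≤ (h / ε) ^ n := by
  obtain ⟨hcont, hY01, -, ℱ, hadap, -, hmart, hqv⟩ := hY
  have hM : ∀ s, 0 ≤ s → StronglyMeasurable[ℱ s] (jacobiMartingalePart κ Y s) := fun s hs =>
    (hadap s).stronglyMeasurable.sub
      (hadap.stronglyMeasurable_intervalIntegral_comp hcont (g := fun y => 2 - (4 + 2 * κ) * y)
        (by fun_prop) hs)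
  have hV : ∀ s, 0 ≤ s → StronglyMeasurable[ℱ s] (jacobiQuadVariation Y s) := fun s hs =>
    hadap.stronglyMeasurable_intervalIntegral_comp hcont (g := fun y => 4 * y * (1 - y))
      (by fun_prop) hs
  have hVabs : ∀ s ω, |jacobiQuadVariation Y s ω| ≤ |s| := fun s ω => by
    have hV0 : jacobiQuadVariation Y 0 ω = 0 := intervalIntegral.integral_same
    have h1 := jacobiQuadVariation_sub_le (hY01 ω) (hcont ω) 0 s
    have h2 := jacobiQuadVariation_sub_le (hY01 ω) (hcont ω) s 0
    simp only [hV0, sub_zero, zero_sub, abs_neg] at h1 h2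
    exact abs_le.mpr ⟨by linarith, h1⟩
  refine _root_.measureReal_biInter_sq_increment_le hM
    (fun s hs => MemLp.of_bound ((hM s hs).mono (ℱ.le s)).aestronglyMeasurable _
      (ae_of_all _ fun ω => abs_jacobiMartingalePart_le (hY01 ω) s))
    (fun s hs => Integrable.of_bound ((hV s hs).mono (ℱ.le s)).aestronglyMeasurable _
      (ae_of_all _ fun ω => hVabs s ω))
    (fun s u _ hsu ω => ?_) hmart hqv hh hε n
  exact (jacobiQuadVariation_sub_le (hY01 ω) (hcont ω) s u).trans_eq (abs_of_nonneg (by linarith))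

theorem stmt12_general {Ω : Type*} [MeasureSpace Ω] [IsProbabilityMeasure (ℙ : Measure Ω)]
    (κ : ℝ) (hκ : 0 < κ) (Y : ℝ → Ω → ℝ) (hY : IsJacobi κ Y)
    (t : ℝ) :
    ℙ {ω | ∀ s ∈ Set.Ioc (0:ℝ) t, Y s ω ≠ 1 / (4 + 2 * κ)}
      ≤ ENNReal.ofReal (2 * Real.exp (-t / 32)) := by
  set n := ⌊t / 8⌋₊
  have hκ' : 0 < 4 + 2 * κ := by linarith
  have hblocks : {ω | ∀ s ∈ Set.Ioc (0:ℝ) t, Y s ω ≠ 1 / (4 + 2 * κ)} ⊆ ⋂ k < n,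
      {ω | 16 ≤ (jacobiMartingalePart κ Y (8 * (k + 1)) ω
        - jacobiMartingalePart κ Y (8 * k) ω) ^ 2} := by
    refine fun ω hω => Set.mem_iInter₂.mpr fun k hk => ?_
    have hkt : 8 * ((k : ℝ) + 1) ≤ t := by
      have := (Nat.le_floor_iff' (a := t / 8) k.succ_ne_zero).mp hk
      push_cast at this
      linarith
    have hbelow := (hY.1 ω).lt_of_forall_Ioc_ne
      (by rw [hY.2.2.1 ω]; exact one_div_pos.mpr hκ') hω
    have hdrop := jacobiMartingalePart_sub_le (a := 8 * k) (b := 8 * (k + 1)) (hY.2.1 ω) hκ'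
      (hY.1 ω) (by linarith)
      (fun u hu => hbelow u ⟨(by positivity : (0:ℝ) ≤ 8 * k).trans hu.1, hu.2.trans hkt⟩)
    rw [Set.mem_ofPred_eq]
    nlinarith
  refine (measure_mono hblocks).trans ?_
  rw [← ofReal_measureReal]
  gcongr
  calc _ ≤ ((8:ℝ) / 16) ^ n :=
        hY.measureReal_biInter_sq_increment_le (by norm_num) (by norm_num) n
    _ = (1 / 2) ^ n := by norm_num
    _ ≤ 2 * exp (-t / 32) := half_pow_floor_div_eight_le t

/-- For the Jacobi process `Y` of dimension `(2, 2+2κ)` started at 0 and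
`α_κ = 1/(4+2κ)`, the hitting time `T_Y(α_κ)` of `α_κ` satisfies
`P(T_Y(α_κ) > t) ≤ 2 exp(-t/32)` for every `t ≥ 2α_κ`. (The event `{T_Y(α_κ) > t}` is
expressed as `Y` not reaching `α_κ` on `(0, t]`.) -/
theorem stmt12 {Ω : Type*} [MeasureSpace Ω] [IsProbabilityMeasure (ℙ : Measure Ω)]
    (κ : ℝ) (hκ : 0 < κ) (Y : ℝ → Ω → ℝ) (hY : IsJacobi κ Y)
    (t : ℝ) (ht : 2 * (1 / (4 + 2 * κ)) ≤ t) :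
    ℙ {ω | ∀ s ∈ Set.Ioc (0:ℝ) t, Y s ω ≠ 1 / (4 + 2 * κ)}
      ≤ ENNReal.ofReal (2 * Real.exp (-t / 32)) :=
  stmt12_general κ hκ Y hY t
end
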